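/- Let D be the truncated discrete Gaussian distribution on ℤ_q^m with parameter B, and let e ∈ ℤ_q^m with ‖e‖ ≤ B√m. Then the total variation distance satisfies ‖D − (D+e)‖²_TV ≤ 2·(1 − exp(−2π√m·‖e‖/B)). -/

import Mathlib

open scoped BigOperators

/-- Absolute value of an element of `ℤ_q`, using the representative in `(−q/2, q/2]`. -/
noncomputable def zAbs {q : ℕ} [NeZero q] (x : ZMod q) : ℝ :=
  |((x.valMinAbs : ℤ) : ℝ)|

/-- Euclidean norm of a vector in `ℤ_q^m` (via representatives in `(−q/2, q/2]`). -/
noncomputable def vnorm {q m : ℕ} [NeZero q] (x : Fin m → ZMod q) : ℝ :=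
  Real.sqrt (∑ i, (zAbs (x i)) ^ 2)

/-- One-dimensional truncated discrete Gaussian on `ℤ_q` with parameter `B`:
supported on `{x : |x| ≤ B}`, with density proportional to `exp(−π|x|²/B²)`. -/
noncomputable def gauss1 (q : ℕ) [NeZero q] (B : ℝ) (x : ZMod q) : ℝ :=
  if zAbs x ≤ B then
    Real.exp (-Real.pi * (zAbs x) ^ 2 / B ^ 2) /
      (∑ y : ZMod q, if zAbs y ≤ B then Real.exp (-Real.pi * (zAbs y) ^ 2 / B ^ 2) else 0)
  else 0

/-- Truncated discrete Gaussian density on `ℤ_q^m` with parameter `B`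
(product of one-dimensional truncated Gaussians). -/
noncomputable def gaussM (q m : ℕ) [NeZero q] (B : ℝ) (x : Fin m → ZMod q) : ℝ :=
  ∏ i, gauss1 q B (x i)

namespace Stmt4Aux

open Finset

variable {q : ℕ} [NeZero q]

lemma zAbs_eq_natAbs (x : ZMod q) : zAbs x = (x.valMinAbs.natAbs : ℝ) := by
  rw [zAbs, Nat.cast_natAbs]
  exact Int.cast_abs.symm

lemma zAbs_nonneg (x : ZMod q) : 0 ≤ zAbs x := abs_nonneg _

lemma zAbs_zero : zAbs (0 : ZMod q) = 0 := by simp [zAbs]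

lemma one_le_zAbs {x : ZMod q} (hx : x ≠ 0) : 1 ≤ zAbs x := by
  rw [zAbs_eq_natAbs]
  have : x.valMinAbs ≠ 0 := fun h => hx ((ZMod.valMinAbs_eq_zero x).mp h)
  have : 1 ≤ x.valMinAbs.natAbs := Nat.one_le_iff_ne_zero.mpr (Int.natAbs_ne_zero.mpr this)
  exact_mod_cast this

lemma zAbs_neg (x : ZMod q) : zAbs (-x) = zAbs x := by
  rw [zAbs_eq_natAbs, zAbs_eq_natAbs, ZMod.natAbs_valMinAbs_neg]

lemma zAbs_add_le (x y : ZMod q) : zAbs (x + y) ≤ zAbs x + zAbs y := by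
  rw [zAbs_eq_natAbs, zAbs_eq_natAbs, zAbs_eq_natAbs]
  have h1 := ZMod.natAbs_valMinAbs_add_le x y
  have h2 := Int.natAbs_add_le x.valMinAbs y.valMinAbs
  have := h1.trans h2
  exact_mod_cast this

lemma zAbs_sub_le (x y : ZMod q) : zAbs (x - y) ≤ zAbs x + zAbs y := by
  have := zAbs_add_le x (-y)
  rw [sub_eq_add_neg]
  rwa [zAbs_neg] at this

lemma zAbs_le_half (x : ZMod q) : 2 * zAbs x ≤ (q : ℝ) := by
  rw [zAbs_eq_natAbs]
  have h := ZMod.natAbs_valMinAbs_le x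
  have : (x.valMinAbs.natAbs : ℝ) ≤ ((q / 2 : ℕ) : ℝ) := by exact_mod_cast h
  have h2 : ((q / 2 : ℕ) : ℝ) ≤ (q : ℝ) / 2 := by
    have := Nat.div_mul_le_self q 2
    have : ((q / 2) * 2 : ℕ) ≤ (q : ℕ) := this
    have := (Nat.cast_le (α := ℝ)).mpr this
    push_cast at this
    linarith
  linarith

lemma zAbs_intCast_le (k : ℤ) : zAbs ((k : ZMod q)) ≤ |(k : ℝ)| := by
  rw [zAbs_eq_natAbs]
  have h := ZMod.natAbs_min_of_le_div_two q ((k : ZMod q)).valMinAbs k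
    (by rw [ZMod.coe_valMinAbs]) (ZMod.natAbs_valMinAbs_le _)
  calc ((((k : ZMod q)).valMinAbs.natAbs : ℝ)) ≤ (k.natAbs : ℝ) := by exact_mod_cast h
    _ = |(k : ℝ)| := by rw [Nat.cast_natAbs]; exact Int.cast_abs


noncomputable def w (q : ℕ) [NeZero q] (B : ℝ) (x : ZMod q) : ℝ :=
  if zAbs x ≤ B then Real.exp (-Real.pi * (zAbs x) ^ 2 / B ^ 2) else 0

noncomputable def Z (q : ℕ) [NeZero q] (B : ℝ) : ℝ := ∑ y : ZMod q, w q B y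

variable {B : ℝ}

lemma w_nonneg (x : ZMod q) : 0 ≤ w q B x := by
  rw [w]; split_ifs
  · exact (Real.exp_pos _).le
  · exact le_refl 0

lemma w_zero (hB : 0 ≤ B) : w q B 0 = 1 := by
  rw [w, zAbs_zero, if_pos hB]
  norm_num

lemma one_le_Z (hB : 0 ≤ B) : 1 ≤ Z q B := by
  rw [Z, ← w_zero (q := q) hB]
  exact Finset.single_le_sum (f := w q B) (fun i _ => w_nonneg i) (Finset.mem_univ 0)

lemma Z_pos (hB : 0 ≤ B) : 0 < Z q B := lt_of_lt_of_le one_pos (one_le_Z hB)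

lemma gauss1_eq (x : ZMod q) : gauss1 q B x = w q B x / Z q B := by
  have hZ : Z q B = ∑ y : ZMod q, if zAbs y ≤ B then Real.exp (-Real.pi * (zAbs y) ^ 2 / B ^ 2) else 0 := rfl
  rw [gauss1, w, ← hZ]
  split_ifs
  · rfl
  · rw [zero_div]

lemma gauss1_nonneg (hB : 0 ≤ B) (x : ZMod q) : 0 ≤ gauss1 q B x := by
  rw [gauss1_eq]; exact div_nonneg (w_nonneg x) (Z_pos hB).le

lemma sum_gauss1 (hB : 0 ≤ B) : ∑ x : ZMod q, gauss1 q B x = 1 := by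
  simp_rw [gauss1_eq, ← Finset.sum_div]
  exact div_self (Z_pos (q := q) hB).ne'


lemma sqrt_w_ge (hB : 0 < B) (ε : ZMod q) (hε : zAbs ε ≤ B / 8) (y : ZMod q) :
    Real.exp (-(17 * Real.pi / 16) * (zAbs ε / B)) * (if zAbs (y - ε) ≤ B then w q B y else 0)
      ≤ Real.sqrt (w q B y * w q B (y - ε)) := by
  by_cases h1 : zAbs (y - ε) ≤ B
  · rw [if_pos h1]
    by_cases h2 : zAbs y ≤ B
    · rw [w, if_pos h2, w, if_pos h1]
      set s := -Real.pi * (zAbs y) ^ 2 / B ^ 2 with hs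
      set t := -Real.pi * (zAbs (y - ε)) ^ 2 / B ^ 2 with ht
      have hsq : Real.exp s * Real.exp t = (Real.exp ((s + t) / 2)) ^ 2 := by
        rw [← Real.exp_nat_mul, ← Real.exp_add]
        norm_num
        ring
      rw [hsq, Real.sqrt_sq (Real.exp_pos _).le, ← Real.exp_add, Real.exp_le_exp]
      have hby := zAbs_sub_le y ε
      have key : 8 * (zAbs (y - ε)) ^ 2 ≤ 17 * zAbs ε * B + 8 * (zAbs y) ^ 2 := by
        nlinarith [zAbs_nonneg y, zAbs_nonneg ε, zAbs_nonneg (y - ε), hB]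
      have hB2 : (0:ℝ) < B ^ 2 := by positivity
      rw [hs, ht, ← add_div, div_div]
      rw [show -(17 * Real.pi / 16) * (zAbs ε / B) + -Real.pi * zAbs y ^ 2 / B ^ 2
          = (-(17 * Real.pi / 16) * (zAbs ε * B) + -Real.pi * zAbs y ^ 2) / B ^ 2 by
        field_simp]
      rw [div_le_div_iff₀ hB2 (by positivity)]
      nlinarith [mul_le_mul_of_nonneg_right (mul_le_mul_of_nonneg_left key Real.pi_pos.le) hB2.le]
    · rw [w, if_neg h2, mul_zero]
      exact Real.sqrt_nonneg _
  · rw [if_neg h1, mul_zero]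
    exact Real.sqrt_nonneg _

lemma card_boundary (hB : 0 < B) {ε : ZMod q} (hne : ε ≠ 0) (hε : zAbs ε ≤ B / 8) :
    ((Finset.univ.filter (fun y : ZMod q => B - zAbs ε < zAbs y ∧ zAbs y ≤ B)).card : ℝ)
      ≤ 2 * zAbs ε := by
  set n : ℤ := (ε.valMinAbs.natAbs : ℤ) with hn
  have han : zAbs ε = (n : ℝ) := by rw [zAbs_eq_natAbs, hn, Int.cast_natCast]
  have hn1 : 1 ≤ n := by
    have := one_le_zAbs hne
    rw [han] at this; exact_mod_cast this
  have hnM : n ≤ ⌊B⌋ := by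
    apply Int.le_floor.mpr
    rw [← han]; linarith
  set M : ℤ := ⌊B⌋ with hM
  have hsub : Finset.Icc (-(M - n)) (M - n) ⊆ Finset.Icc (-M) M :=
    Finset.Icc_subset_Icc (by omega) (by omega)
  have hcard : (((Finset.Icc (-M) M) \ (Finset.Icc (-(M - n)) (M - n))).card : ℝ) = 2 * (n : ℝ) := by
    have : (((Finset.Icc (-M) M) \ (Finset.Icc (-(M - n)) (M - n))).card : ℤ) = 2 * n := by
      rw [Finset.card_sdiff_of_subset hsub, Int.card_Icc, Int.card_Icc]
      push_cast
      omega
    exact_mod_cast this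
  rw [han, ← hcard]
  have hMB : (M : ℝ) ≤ B := Int.floor_le B
  apply Nat.cast_le.mpr
  apply Finset.card_le_card_of_injOn (fun y => y.valMinAbs)
  · intro y hy
    simp only [Finset.mem_coe, Finset.mem_filter, Finset.mem_univ, true_and] at hy
    obtain ⟨hy1, hy2⟩ := hy
    have hza : zAbs y = (y.valMinAbs.natAbs : ℝ) := zAbs_eq_natAbs y
    have habs_eq : |y.valMinAbs| = (y.valMinAbs.natAbs : ℤ) := Int.abs_eq_natAbs _
    rw [Finset.mem_coe, Finset.mem_sdiff]
    constructor
    · rw [Finset.mem_Icc, ← abs_le, habs_eq]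
      apply Int.le_floor.mpr
      rw [Int.cast_natCast, ← hza]
      exact hy2
    · rw [Finset.mem_Icc, ← abs_le]
      intro habs
      rw [habs_eq] at habs
      have h2 : (y.valMinAbs.natAbs : ℝ) ≤ (M : ℝ) - (n : ℝ) := by
        have h3 := (@Int.cast_le ℝ _ _ _).mpr habs
        rwa [Int.cast_sub, Int.cast_natCast] at h3
      rw [← hza] at h2
      linarith
  · exact ZMod.injective_valMinAbs.injOn

lemma Z_lower (hB : 8 ≤ B) (hq : 2 * ⌊B / 2⌋ + 1 ≤ (q : ℤ)) :
    3 * B / 4 * Real.exp (-(Real.pi / 4)) ≤ Z q B := by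
  set N : ℤ := ⌊B / 2⌋ with hN
  have hB0 : (0:ℝ) < B := by linarith
  have hNB : (N : ℝ) ≤ B / 2 := Int.floor_le _
  have hN4 : 4 ≤ N := by
    apply Int.le_floor.mpr; norm_num; linarith
  set F : Finset (ZMod q) := (Finset.Icc (-N) N).image (fun k : ℤ => (k : ZMod q)) with hF
  have hinj : Set.InjOn (fun k : ℤ => (k : ZMod q)) (Finset.Icc (-N) N) := by
    intro k1 h1 k2 h2 h
    simp only [Finset.coe_Icc, Set.mem_Icc] at h1 h2
    have h' : ((k1 : ZMod q)) = (k2 : ZMod q) := h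
    have hdvd : (q : ℤ) ∣ k1 - k2 := by
      rw [← ZMod.intCast_zmod_eq_zero_iff_dvd]
      push_cast
      rw [h']; ring
    have habs : |k1 - k2| < (q : ℤ) := by
      rw [abs_lt]; omega
    have := Int.eq_zero_of_abs_lt_dvd hdvd habs
    omega
  have hcardF : (F.card : ℝ) = ((2 * N + 1 : ℤ) : ℝ) := by
    have h1 : F.card = (2 * N + 1).toNat := by
      rw [hF, Finset.card_image_of_injOn hinj, Int.card_Icc]
      congr 1
      ring
    have h2 : ((2 * N + 1).toNat : ℤ) = 2 * N + 1 := Int.toNat_of_nonneg (by omega)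
    rw [h1]
    exact_mod_cast h2
  have hwF : ∀ y ∈ F, Real.exp (-(Real.pi / 4)) ≤ w q B y := by
    intro y hy
    rw [hF, Finset.mem_image] at hy
    obtain ⟨k, hk, rfl⟩ := hy
    simp only [Finset.mem_Icc] at hk
    have hzk : zAbs ((k : ZMod q)) ≤ B / 2 := by
      refine (zAbs_intCast_le k).trans ?_
      have : |(k : ℝ)| ≤ (N : ℝ) := by
        rw [← Int.cast_abs]
        exact_mod_cast abs_le.mpr hk
      linarith
    rw [w, if_pos (by linarith)]
    rw [Real.exp_le_exp, le_div_iff₀ (by positivity : (0:ℝ) < B ^ 2)]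
    have h0 := zAbs_nonneg ((k : ZMod q))
    have hzk2 : zAbs ((k : ZMod q)) ^ 2 ≤ (B / 2) ^ 2 := by nlinarith
    nlinarith [mul_le_mul_of_nonneg_left hzk2 Real.pi_pos.le]
  have hsum : ∑ y ∈ F, w q B y ≤ Z q B :=
    Finset.sum_le_sum_of_subset_of_nonneg (Finset.subset_univ F) (fun y _ _ => w_nonneg y)
  have hsum2 : (F.card : ℝ) * Real.exp (-(Real.pi / 4)) ≤ ∑ y ∈ F, w q B y := by
    have := Finset.card_nsmul_le_sum F (w q B) (Real.exp (-(Real.pi / 4))) hwF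
    rwa [nsmul_eq_mul] at this
  have hcge : 3 * B / 4 ≤ (F.card : ℝ) := by
    rw [hcardF]
    push_cast
    have : B / 2 - 1 < (N : ℝ) := Int.sub_one_lt_floor _
    linarith
  calc 3 * B / 4 * Real.exp (-(Real.pi / 4)) ≤ (F.card : ℝ) * Real.exp (-(Real.pi / 4)) := by
        apply mul_le_mul_of_nonneg_right hcge (Real.exp_pos _).le
    _ ≤ ∑ y ∈ F, w q B y := hsum2
    _ ≤ Z q B := hsum


set_option maxHeartbeats 1000000 in
lemma onedim (hB : 0 < B) (ε : ZMod q) (hε : zAbs ε ≤ B / 8) :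
    Real.exp (-(2 * Real.pi) * (zAbs ε / B))
      ≤ ∑ y : ZMod q, Real.sqrt (gauss1 q B y * gauss1 q B (y - ε)) := by
  rcases eq_or_ne ε 0 with rfl | hne
  · rw [zAbs_zero]
    simp only [sub_zero, zero_div, mul_zero, Real.exp_zero]
    have h : ∀ y : ZMod q, Real.sqrt (gauss1 q B y * gauss1 q B y) = gauss1 q B y := fun y =>
      Real.sqrt_mul_self (gauss1_nonneg hB.le y)
    rw [Finset.sum_congr rfl (fun y _ => h y), sum_gauss1 hB.le]
  · set a := zAbs ε with ha
    have ha1 : 1 ≤ a := one_le_zAbs hne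
    have hB8 : 8 ≤ B := by linarith
    have hZpos : 0 < Z q B := Z_pos hB.le
    set c1 := Real.exp (-(17 * Real.pi / 16) * (a / B)) with hc1
    set c2 := Real.exp (-(15 * Real.pi / 16) * (a / B)) with hc2
    have hc1c2 : c1 * c2 = Real.exp (-(2 * Real.pi) * (a / B)) := by
      rw [hc1, hc2, ← Real.exp_add]
      congr 1
      ring
    set df := ∑ y : ZMod q, (if zAbs (y - ε) ≤ B then 0 else w q B y) with hdf
    have hsplit : ∑ y : ZMod q, (if zAbs (y - ε) ≤ B then w q B y else 0) = Z q B - df := by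
      rw [hdf, Z, ← Finset.sum_sub_distrib]
      apply Finset.sum_congr rfl
      intro y _
      split_ifs <;> ring
    -- deficit bound
    set β := Real.exp (-(49 * Real.pi / 64)) with hβ
    have hdfle : df ≤ 2 * a * β := by
      have hterm : ∀ y : ZMod q, (if zAbs (y - ε) ≤ B then 0 else w q B y)
          ≤ (if B - a < zAbs y ∧ zAbs y ≤ B then β else 0) := by
        intro y
        by_cases h1 : zAbs (y - ε) ≤ B
        · rw [if_pos h1]
          split_ifs
          · exact (Real.exp_pos _).le
          · exact le_refl 0
        · rw [if_neg h1]
          by_cases h2 : zAbs y ≤ B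
          · have hlow : B - a < zAbs y := by
              have := zAbs_sub_le y ε
              rw [← ha] at this
              push_neg at h1
              linarith
            rw [if_pos ⟨hlow, h2⟩, w, if_pos h2, hβ, Real.exp_le_exp]
            have h0 := zAbs_nonneg y
            have hBa : 7 * B / 8 ≤ B - a := by linarith
            have hsq : (B - a) ^ 2 ≤ (zAbs y) ^ 2 := by nlinarith
            rw [div_le_iff₀ (by positivity : (0:ℝ) < B ^ 2)]
            have h49 : 49 * B ^ 2 / 64 ≤ zAbs y ^ 2 := by nlinarith
            nlinarith [mul_le_mul_of_nonneg_left h49 Real.pi_pos.le]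
          · rw [w, if_neg h2]
            split_ifs
            · exact (Real.exp_pos _).le
            · exact le_refl 0
      calc df ≤ ∑ y : ZMod q, (if B - a < zAbs y ∧ zAbs y ≤ B then β else 0) :=
            Finset.sum_le_sum (fun y _ => hterm y)
        _ = ((Finset.univ.filter (fun y : ZMod q => B - a < zAbs y ∧ zAbs y ≤ B)).card : ℝ) * β := by
            rw [← Finset.sum_filter, Finset.sum_const, nsmul_eq_mul]
        _ ≤ 2 * a * β := by
            apply mul_le_mul_of_nonneg_right _ (Real.exp_pos _).le
            exact card_boundary hB hne hε
    -- key inequality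
    have hkey : df ≤ Z q B * (1 - c2) := by
      by_cases hq : 2 * ⌊B / 2⌋ + 1 ≤ (q : ℤ)
      · -- big q case
        have hZlow : 3 * B / 4 * Real.exp (-(Real.pi / 4)) ≤ Z q B := Z_lower hB8 hq
        set x := 15 * Real.pi / 16 * (a / B) with hx
        have hxpos : 0 < x := by
          rw [hx]
          have : 0 < a / B := by positivity
          positivity
        have hxle : x ≤ 15 * Real.pi / 128 := by
          rw [hx]
          have haB : a / B ≤ 1 / 8 := by
            rw [div_le_div_iff₀ hB (by norm_num)]
            linarith
          have : 0 < 15 * Real.pi / 16 := by positivity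
          calc 15 * Real.pi / 16 * (a / B) ≤ 15 * Real.pi / 16 * (1 / 8) :=
              mul_le_mul_of_nonneg_left haB this.le
            _ = 15 * Real.pi / 128 := by ring
        have hc2x : c2 ≤ 1 / (1 + x) := by
          rw [hc2, show -(15 * Real.pi / 16) * (a / B) = -x by rw [hx]; ring, Real.exp_neg,
            inv_eq_one_div]
          apply one_div_le_one_div_of_le (by linarith)
          have := Real.add_one_le_exp x
          linarith
        have h1c2 : x / (1 + x) ≤ 1 - c2 := by
          have h1x : (0:ℝ) < 1 + x := by linarith
          have : 1 - 1 / (1 + x) = x / (1 + x) := by field_simp; ring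
          linarith [hc2x, this]
        -- numeric bounds
        have hπl := Real.pi_gt_d6
        have hπu := Real.pi_lt_d6
        have hγ : (0.417 : ℝ) ≤ Real.exp (-(Real.pi / 4)) := by
          have h4 : Real.exp (-(Real.pi / 4)) = Real.exp (-(Real.pi / 16)) ^ 4 := by
            rw [← Real.exp_nat_mul]
            congr 1
            push_cast
            ring
          have hb : (0.8036 : ℝ) ≤ Real.exp (-(Real.pi / 16)) := by
            have := Real.add_one_le_exp (-(Real.pi / 16))
            linarith
          have : (0.8036 : ℝ) ^ 4 ≤ Real.exp (-(Real.pi / 16)) ^ 4 :=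
            pow_le_pow_left₀ (by norm_num) hb 4
          rw [h4]
          nlinarith
        have hβu : β ≤ (0.21 : ℝ) := by
          have hsq : Real.exp (49 * Real.pi / 64) = Real.exp (49 * Real.pi / 128) ^ 2 := by
            rw [← Real.exp_nat_mul]
            congr 1
            push_cast
            ring
          have hb : (2.2026 : ℝ) ≤ Real.exp (49 * Real.pi / 128) := by
            have := Real.add_one_le_exp (49 * Real.pi / 128)
            linarith
          have h2 : (4.85 : ℝ) ≤ Real.exp (49 * Real.pi / 64) := by
            rw [hsq]
            nlinarith
          rw [hβ, Real.exp_neg, inv_eq_one_div, div_le_iff₀ (Real.exp_pos _)]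
          nlinarith
        -- combine
        have hZx : Z q B * (x / (1 + x)) ≥ 2 * a * β := by
          have hden : (0:ℝ) < 1 + x := by linarith
          have hdle : 1 + x ≤ 1 + 15 * Real.pi / 128 := by linarith
          have hfrac : x / (1 + 15 * Real.pi / 128) ≤ x / (1 + x) :=
            div_le_div_of_nonneg_left hxpos.le (by linarith) hdle
          have hZ2 : Z q B * (x / (1 + x)) ≥ (3 * B / 4 * Real.exp (-(Real.pi / 4))) * (x / (1 + 15 * Real.pi / 128)) := by
            apply mul_le_mul hZlow hfrac
              (div_nonneg hxpos.le (by positivity : (0:ℝ) ≤ 1 + 15 * Real.pi / 128)) hZpos.le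
          have hexpand : (3 * B / 4 * Real.exp (-(Real.pi / 4))) * (x / (1 + 15 * Real.pi / 128))
              = (45 * Real.pi / 64) * a * Real.exp (-(Real.pi / 4)) / (1 + 15 * Real.pi / 128) := by
            rw [hx]
            field_simp
            ring
          rw [hexpand] at hZ2
          refine le_trans ?_ hZ2
          have hd : (0:ℝ) < 1 + 15 * Real.pi / 128 := by positivity
          rw [le_div_iff₀ hd]
          have hnum : 2 * β * (1 + 15 * Real.pi / 128) ≤ 45 * Real.pi / 64 * Real.exp (-(Real.pi / 4)) := by
            nlinarith [hβu, hγ, hπl, hπu, (Real.exp_pos (-(49 * Real.pi / 64))).le,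
              (Real.exp_pos (-(Real.pi / 4))).le]
          nlinarith [mul_le_mul_of_nonneg_left hnum (by linarith : (0:ℝ) ≤ a)]
        have : 2 * a * β ≤ Z q B * (1 - c2) := by
          calc 2 * a * β ≤ Z q B * (x / (1 + x)) := hZx
            _ ≤ Z q B * (1 - c2) := mul_le_mul_of_nonneg_left h1c2 hZpos.le
        linarith [hdfle]
      · -- small q case
        push_neg at hq
        have hdf0 : df = 0 := by
          rw [hdf]
          apply Finset.sum_eq_zero
          intro y _
          rw [if_pos]
          have h2 := zAbs_le_half (y - ε)
          have hqB : (q : ℝ) ≤ B := by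
            have : (q : ℤ) ≤ 2 * ⌊B / 2⌋ := by omega
            have h3 : ((q : ℤ) : ℝ) ≤ ((2 * ⌊B / 2⌋ : ℤ) : ℝ) := by exact_mod_cast this
            push_cast at h3
            have := Int.floor_le (B / 2)
            linarith
          linarith
        rw [hdf0]
        have : c2 ≤ 1 := by
          rw [hc2, Real.exp_le_one_iff]
          have : 0 ≤ a / B := by positivity
          nlinarith [Real.pi_pos]
        nlinarith [hZpos]
    -- conclude
    have hc2Z : c2 ≤ (Z q B - df) / Z q B := by
      rw [le_div_iff₀ hZpos]
      nlinarith
    have hsum1 : ∀ y : ZMod q, Real.sqrt (gauss1 q B y * gauss1 q B (y - ε))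
        = Real.sqrt (w q B y * w q B (y - ε)) / Z q B := by
      intro y
      rw [gauss1_eq, gauss1_eq]
      rw [show w q B y / Z q B * (w q B (y - ε) / Z q B) = w q B y * w q B (y - ε) / (Z q B) ^ 2 by ring]
      rw [Real.sqrt_div (mul_nonneg (w_nonneg y) (w_nonneg (y - ε))), Real.sqrt_sq hZpos.le]
    calc Real.exp (-(2 * Real.pi) * (a / B)) = c1 * c2 := hc1c2.symm
      _ ≤ c1 * ((Z q B - df) / Z q B) := mul_le_mul_of_nonneg_left hc2Z (Real.exp_pos _).le
      _ = (c1 * (Z q B - df)) / Z q B := by ring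
      _ ≤ (∑ y : ZMod q, Real.sqrt (w q B y * w q B (y - ε))) / Z q B := by
          apply (div_le_div_iff_of_pos_right hZpos).mpr
          rw [← hsplit, Finset.mul_sum]
          exact Finset.sum_le_sum (fun y _ => sqrt_w_ge hB ε hε y)
      _ = ∑ y : ZMod q, Real.sqrt (gauss1 q B y * gauss1 q B (y - ε)) := by
          rw [Finset.sum_div]
          exact (Finset.sum_congr rfl (fun y _ => hsum1 y)).symm


lemma sqrt_prod {ι : Type*} (s : Finset ι) (f : ι → ℝ) (hf : ∀ i ∈ s, 0 ≤ f i) :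
    Real.sqrt (∏ i ∈ s, f i) = ∏ i ∈ s, Real.sqrt (f i) := by
  induction s using Finset.cons_induction with
  | empty => simp
  | cons i s his ih =>
    rw [Finset.prod_cons, Finset.prod_cons, Real.sqrt_mul (hf i (Finset.mem_cons_self i s)),
      ih (fun j hj => hf j (Finset.mem_cons_of_mem hj))]

lemma tv_sq {α : Type*} [Fintype α] (p r : α → ℝ) (hp : ∀ x, 0 ≤ p x) (hr : ∀ x, 0 ≤ r x)
    (hp1 : ∑ x, p x = 1) (hr1 : ∑ x, r x = 1) {ρ0 : ℝ}
    (hρ : ρ0 ≤ ∑ x, Real.sqrt (p x * r x)) :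
    ((1 / 2) * ∑ x, |p x - r x|) ^ 2 ≤ 2 * (1 - ρ0) := by
  set s : α → ℝ := fun x => Real.sqrt (p x) with hs
  set t : α → ℝ := fun x => Real.sqrt (r x) with ht
  have hs2 : ∀ x, s x ^ 2 = p x := fun x => Real.sq_sqrt (hp x)
  have ht2 : ∀ x, t x ^ 2 = r x := fun x => Real.sq_sqrt (hr x)
  have habs : ∀ x, |p x - r x| = |s x - t x| * (s x + t x) := by
    intro x
    rw [← hs2 x, ← ht2 x, show s x ^ 2 - t x ^ 2 = (s x - t x) * (s x + t x) by ring, abs_mul,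
      abs_of_nonneg (add_nonneg (Real.sqrt_nonneg _) (Real.sqrt_nonneg _))]
  have hst : ∀ x, s x * t x = Real.sqrt (p x * r x) := fun x =>
    (Real.sqrt_mul (hp x) (r x)).symm
  set ρ := ∑ x, s x * t x with hρdef
  have hρge : ρ0 ≤ ρ := by
    rw [hρdef]
    rw [Finset.sum_congr rfl (fun x _ => hst x)]
    exact hρ
  have hA : ∑ x, |s x - t x| ^ 2 = 2 - 2 * ρ := by
    have : ∀ x, |s x - t x| ^ 2 = s x ^ 2 + t x ^ 2 - 2 * (s x * t x) := by
      intro x; rw [sq_abs]; ring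
    rw [Finset.sum_congr rfl (fun x _ => this x)]
    rw [Finset.sum_sub_distrib, Finset.sum_add_distrib, ← Finset.mul_sum]
    simp_rw [hs2, ht2]
    rw [hp1, hr1, hρdef]
    ring
  have hB2 : ∑ x, (s x + t x) ^ 2 = 2 + 2 * ρ := by
    have : ∀ x, (s x + t x) ^ 2 = s x ^ 2 + t x ^ 2 + 2 * (s x * t x) := by
      intro x; ring
    rw [Finset.sum_congr rfl (fun x _ => this x)]
    rw [Finset.sum_add_distrib, Finset.sum_add_distrib, ← Finset.mul_sum]
    simp_rw [hs2, ht2]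
    rw [hp1, hr1, hρdef]
    ring
  have hCS := Finset.sum_mul_sq_le_sq_mul_sq Finset.univ (fun x => |s x - t x|) (fun x => s x + t x)
  have hρ1 : ρ ≤ 1 := by
    have h0 : 0 ≤ ∑ x, |s x - t x| ^ 2 := Finset.sum_nonneg (fun x _ => sq_nonneg _)
    rw [hA] at h0
    linarith
  have heq : ∑ x, |p x - r x| = ∑ x, |s x - t x| * (s x + t x) :=
    Finset.sum_congr rfl (fun x _ => habs x)
  rw [heq]
  rw [hA, hB2] at hCS
  nlinarith [hCS, hρge, hρ1]

variable (q) in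
lemma sum_gauss1_shift (hB : 0 ≤ B) (ε : ZMod q) :
    ∑ y : ZMod q, gauss1 q B (y - ε) = 1 := by
  rw [← sum_gauss1 (q := q) hB]
  exact Fintype.sum_equiv (Equiv.subRight ε) _ _ (fun y => rfl)

end Stmt4Aux

open Stmt4Aux in
set_option maxHeartbeats 1000000 in
/-- For the truncated discrete Gaussian `D` on `ℤ_q^m` with parameter `B > 0`
and a shift `e` with `‖e‖ ≤ B√m`, the total variation distance satisfies
`‖D − (D+e)‖²_TV ≤ 2·(1 − exp(−2π√m·‖e‖/B))`, where `(D+e)(x) = D(x−e)`. -/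
theorem stmt4 (q m : ℕ) [NeZero q] (B : ℝ) (hB : 0 < B)
    (e : Fin m → ZMod q) (he : vnorm e ≤ B * Real.sqrt m) :
    ((1 / 2) * ∑ x : Fin m → ZMod q, |gaussM q m B x - gaussM q m B (x - e)|) ^ 2
      ≤ 2 * (1 - Real.exp (-2 * Real.pi * Real.sqrt m * vnorm e / B)) := by
  classical
  have hp : ∀ x : Fin m → ZMod q, 0 ≤ gaussM q m B x := fun x =>
    Finset.prod_nonneg (fun i _ => gauss1_nonneg hB.le _)
  have hp' : ∀ x : Fin m → ZMod q, 0 ≤ gaussM q m B (x - e) := fun x => hp _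
  have hp1 : ∑ x : Fin m → ZMod q, gaussM q m B x = 1 := by
    simp only [gaussM]
    rw [← Fintype.prod_sum (f := fun (_ : Fin m) (y : ZMod q) => gauss1 q B y)]
    rw [Finset.prod_congr rfl (fun i _ => sum_gauss1 (q := q) hB.le)]
    simp
  have hq1 : ∑ x : Fin m → ZMod q, gaussM q m B (x - e) = 1 := by
    rw [← hp1]
    exact Fintype.sum_equiv (Equiv.subRight e) _ _ (fun x => rfl)
  have hρfact : ∑ x : Fin m → ZMod q, Real.sqrt (gaussM q m B x * gaussM q m B (x - e))
      = ∏ i : Fin m, ∑ y : ZMod q, Real.sqrt (gauss1 q B y * gauss1 q B (y - e i)) := by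
    have h1 : ∀ x : Fin m → ZMod q, Real.sqrt (gaussM q m B x * gaussM q m B (x - e))
        = ∏ i : Fin m, Real.sqrt (gauss1 q B (x i) * gauss1 q B (x i - e i)) := by
      intro x
      have h2 : gaussM q m B x * gaussM q m B (x - e)
          = ∏ i : Fin m, (gauss1 q B (x i) * gauss1 q B (x i - e i)) := by
        rw [gaussM, gaussM, ← Finset.prod_mul_distrib]
        rfl
      rw [h2, sqrt_prod _ _ (fun i _ => mul_nonneg (gauss1_nonneg hB.le _) (gauss1_nonneg hB.le _))]
    rw [Finset.sum_congr rfl (fun x _ => h1 x)]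
    rw [← Fintype.prod_sum (f := fun (i : Fin m) (y : ZMod q) =>
      Real.sqrt (gauss1 q B y * gauss1 q B (y - e i)))]
  by_cases hcase : vnorm e ≤ B / 8
  · -- hard case
    have hvnn : 0 ≤ vnorm e := Real.sqrt_nonneg _
    have hei : ∀ i, zAbs (e i) ≤ B / 8 := by
      intro i
      refine le_trans ?_ hcase
      have h1 : zAbs (e i) ^ 2 ≤ ∑ j : Fin m, zAbs (e j) ^ 2 :=
        Finset.single_le_sum (f := fun j => zAbs (e j) ^ 2) (fun j _ => sq_nonneg _)
          (Finset.mem_univ i)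
      have := Real.sqrt_le_sqrt h1
      rwa [Real.sqrt_sq (zAbs_nonneg _)] at this
    have hsum_le : ∑ i : Fin m, zAbs (e i) ≤ Real.sqrt m * vnorm e := by
      have hCS := Finset.sum_mul_sq_le_sq_mul_sq Finset.univ (fun _ : Fin m => (1:ℝ))
        (fun i => zAbs (e i))
      simp only [one_pow, one_mul, Finset.sum_const, Finset.card_univ, Fintype.card_fin,
        nsmul_eq_mul, mul_one] at hCS
      have h0 : 0 ≤ ∑ i : Fin m, zAbs (e i) := Finset.sum_nonneg (fun i _ => zAbs_nonneg _)
      have := Real.sqrt_le_sqrt hCS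
      rw [Real.sqrt_sq h0, Real.sqrt_mul (Nat.cast_nonneg m)] at this
      exact this
    have hρlow : Real.exp (-2 * Real.pi * Real.sqrt m * vnorm e / B)
        ≤ ∑ x : Fin m → ZMod q, Real.sqrt (gaussM q m B x * gaussM q m B (x - e)) := by
      rw [hρfact]
      calc Real.exp (-2 * Real.pi * Real.sqrt m * vnorm e / B)
          ≤ ∏ i : Fin m, Real.exp (-(2 * Real.pi) * (zAbs (e i) / B)) := by
            rw [← Real.exp_sum, Real.exp_le_exp]
            have heq : ∑ i : Fin m, -(2 * Real.pi) * (zAbs (e i) / B)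
                = -(2 * Real.pi) * (∑ i : Fin m, zAbs (e i)) / B := by
              simp_rw [← mul_div_assoc]
              rw [← Finset.sum_div, ← Finset.mul_sum]
            rw [heq]
            rw [div_le_div_iff₀ hB hB]
            have h2 : 0 < 2 * Real.pi := by positivity
            nlinarith [mul_le_mul_of_nonneg_left hsum_le h2.le, sq_nonneg B]
        _ ≤ ∏ i : Fin m, ∑ y : ZMod q, Real.sqrt (gauss1 q B y * gauss1 q B (y - e i)) :=
            Finset.prod_le_prod (fun i _ => (Real.exp_pos _).le)
              (fun i _ => onedim hB (e i) (hei i))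
    exact tv_sq _ _ hp hp' hp1 hq1 hρlow
  · -- easy case
    push_neg at hcase
    have hm : 1 ≤ m := by
      rcases Nat.eq_zero_or_pos m with rfl | h
      · exfalso
        have : vnorm e = 0 := by simp [vnorm]
        rw [this] at hcase
        linarith
      · exact h
    have hsm : 1 ≤ Real.sqrt m := by
      rw [show (1:ℝ) = Real.sqrt 1 by rw [Real.sqrt_one]]
      apply Real.sqrt_le_sqrt
      exact_mod_cast hm
    have hπl := Real.pi_gt_d6
    have hexp : Real.exp (-2 * Real.pi * Real.sqrt m * vnorm e / B) ≤ 1 / 2 := by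
      have hr : 1 / 8 ≤ vnorm e / B := by
        rw [le_div_iff₀ hB]
        linarith
      have harg : -2 * Real.pi * Real.sqrt m * vnorm e / B ≤ -(Real.pi / 4) := by
        rw [show -2 * Real.pi * Real.sqrt m * vnorm e / B
            = -(2 * Real.pi * (Real.sqrt m * (vnorm e / B))) by rw [mul_div_assoc]; ring]
        have h1 : (1:ℝ) * (1/8) ≤ Real.sqrt m * (vnorm e / B) :=
          mul_le_mul hsm hr (by norm_num) (by linarith)
        nlinarith [Real.pi_pos]
      have h2 : Real.exp (-(Real.pi / 4)) ≤ 1 / 2 := by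
        have hcube : Real.exp (Real.pi / 4) = Real.exp (Real.pi / 12) ^ 3 := by
          rw [← Real.exp_nat_mul]
          congr 1
          push_cast
          ring
        have hb : 1 + Real.pi / 12 ≤ Real.exp (Real.pi / 12) := by
          have := Real.add_one_le_exp (Real.pi / 12)
          linarith
        have h3 : (2:ℝ) ≤ Real.exp (Real.pi / 4) := by
          rw [hcube]
          have hq12 : (1.2617 : ℝ) ≤ 1 + Real.pi / 12 := by linarith
          have hpow := pow_le_pow_left₀ (by norm_num : (0:ℝ) ≤ 1.2617) (hq12.trans hb) 3
          have hval : (2:ℝ) ≤ (1.2617 : ℝ) ^ 3 := by norm_num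
          linarith
        rw [Real.exp_neg, inv_eq_one_div]
        rw [div_le_div_iff₀ (Real.exp_pos _) (by norm_num)]
        linarith
      calc Real.exp (-2 * Real.pi * Real.sqrt m * vnorm e / B)
          ≤ Real.exp (-(Real.pi / 4)) := Real.exp_le_exp.mpr harg
        _ ≤ 1 / 2 := h2
    have hS : ∑ x : Fin m → ZMod q, |gaussM q m B x - gaussM q m B (x - e)| ≤ 2 := by
      have h1 : ∀ x : Fin m → ZMod q, |gaussM q m B x - gaussM q m B (x - e)|
          ≤ gaussM q m B x + gaussM q m B (x - e) := by
        intro x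
        rw [sub_eq_add_neg]
        refine (abs_add_le _ _).trans ?_
        rw [abs_neg, abs_of_nonneg (hp x), abs_of_nonneg (hp' x)]
      calc ∑ x : Fin m → ZMod q, |gaussM q m B x - gaussM q m B (x - e)|
          ≤ ∑ x : Fin m → ZMod q, (gaussM q m B x + gaussM q m B (x - e)) :=
            Finset.sum_le_sum (fun x _ => h1 x)
        _ = 2 := by rw [Finset.sum_add_distrib, hp1, hq1]; norm_num
    have hS0 : 0 ≤ ∑ x : Fin m → ZMod q, |gaussM q m B x - gaussM q m B (x - e)| :=
      Finset.sum_nonneg (fun x _ => abs_nonneg _)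
    nlinarith [hS, hS0, hexp]
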